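/- arXiv:1304.7750 — 2 statements merged into one kernel-verified Lean document; each statement's English description precedes it below -/
import Mathlib

section
/- Let (a,b,c) be a triple of positive real numbers with a < b < c and b − a < c₀ < a, where c₀ := c − ⌊c/b⌋·b. Then for every integer n ≥ 0, the image set (R_{a,b,c})ⁿ([c−c₀, c+b−c₀−a) + aℤ) of the n-fold iterate of R_{a,b,c} applied to the black hole of R̃_{a,b,c} is disjoint from S_{a,b,c}. -/
open MeasureTheory Set

/- Indicator function of the interval `[0, c)`. -/
open Classical in
noncomputable def chiIco (c x : ℝ) : ℝ := if 0 ≤ x ∧ x < c then 1 else 0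

/-- The row `μ = j·a` of the infinite matrix `M_{a,b,c}(t)` applied to the vector
`z : bℤ → ℝ` (indexed by `k : ℤ`, with `λ = k·b`):
`(M_{a,b,c}(t)z)(μ) = Σ_{λ∈bℤ} χ_{[0,c)}(t − μ + λ)·z(λ)`. -/
noncomputable def Mrow (a b c t : ℝ) (z : ℤ → ℝ) (j : ℤ) : ℝ :=
  ∑' k : ℤ, chiIco c (t - (j : ℝ) * a + (k : ℝ) * b) * z k

/-- `D_{a,b,c} = {t : M_{a,b,c}(t)x = 2 for some binary x with x(0) = 1}`. -/
def Dset (a b c : ℝ) : Set ℝ :=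
  {t : ℝ | ∃ x : ℤ → ℝ, (∀ k, x k = 0 ∨ x k = 1) ∧ x 0 = 1 ∧ ∀ j : ℤ, Mrow a b c t x j = 2}

/-- `S_{a,b,c} = {t : M_{a,b,c}(t)x = 1 for some binary x with x(0) = 1}`. -/
def Sset (a b c : ℝ) : Set ℝ :=
  {t : ℝ | ∃ x : ℤ → ℝ, (∀ k, x k = 0 ∨ x k = 1) ∧ x 0 = 1 ∧ ∀ j : ℤ, Mrow a b c t x j = 1}

/-- The periodic set `X + aℤ = {x + ka : x ∈ X, k ∈ ℤ}`. -/
def perSet (a : ℝ) (X : Set ℝ) : Set ℝ := {t : ℝ | ∃ k : ℤ, t - (k : ℝ) * a ∈ X}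

/- The piecewise linear transformation `R_{a,b,c}`. -/
open Classical in
noncomputable def Rmap (a b c : ℝ) (t : ℝ) : ℝ :=
  if t ∈ perSet a (Set.Ico 0 ((c - (⌊c / b⌋ : ℝ) * b) + a - b)) then
    t + (⌊c / b⌋ : ℝ) * b + b
  else if t ∈ perSet a (Set.Ico ((c - (⌊c / b⌋ : ℝ) * b) + a - b) (c - (⌊c / b⌋ : ℝ) * b)) then
    t
  else t + (⌊c / b⌋ : ℝ) * b

/- The piecewise linear transformation `R̃_{a,b,c}`. -/
open Classical in
noncomputable def Rtil (a b c : ℝ) (t : ℝ) : ℝ :=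
  if t ∈ perSet a (Set.Ico (c - a) (c - (c - (⌊c / b⌋ : ℝ) * b))) then
    t - (⌊c / b⌋ : ℝ) * b
  else if t ∈ perSet a
      (Set.Ico (c - (c - (⌊c / b⌋ : ℝ) * b)) (c + b - (c - (⌊c / b⌋ : ℝ) * b) - a)) then
    t
  else t - (⌊c / b⌋ : ℝ) * b - b

/-!
Write `q = ⌊c/b⌋`. If `x` witnesses `t ∈ S_{a,b,c}` and `t - ja ∈ [c, c + a)`, then row `j` is
hit by some `x(k)` with `k < 0`, while row `j + 1` is already hit by `x(0)`; this leaves only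
`k = -q` with `t - ja < c + a - c₀`, or `k = -q - 1` with `t - ja ≥ c + b - c₀`. The gap between
these two windows is the black hole of `R̃_{a,b,c}` shifted by `a`, so it misses `S_{a,b,c}`.
On the other hand, `R_{a,b,c}` moves `t` by `qb + b`, `0` or `qb`, and in the first and last case
the window of `R_{a,b,c}(t)` forces `x(-q-1) = 1`, resp. `x(-q) = 1`, so shifting `x` shows that
`R_{a,b,c}(t) ∈ S_{a,b,c}` implies `t ∈ S_{a,b,c}`. The complement of `S_{a,b,c}` is therefore
invariant under `R_{a,b,c}` and contains the black hole.
-/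

lemma existsUnique_eq_one_of_tsum_eq_one {α : Type*} {f : α → ℝ}
    (h01 : ∀ i, f i = 0 ∨ f i = 1) (hf : ∑' i, f i = 1) : ∃! i, f i = 1 := by
  have hsum : Summable f := by
    by_contra h
    rw [tsum_eq_zero_of_not_summable h] at hf
    exact zero_ne_one hf
  obtain ⟨i, hi⟩ : ∃ i, f i = 1 := by
    by_contra! h
    have hzero : f = 0 := funext fun i => (h01 i).resolve_right (h i)
    simp [hzero] at hf
  refine ⟨i, hi, fun j hj => ?_⟩
  classical
  by_contra hne
  have hpair := hsum.sum_le_tsum {j, i} fun k _ => (h01 k).elim (·.ge) (·.ge.trans' zero_le_one)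
  rw [Finset.sum_pair hne, hi, hj, hf] at hpair
  norm_num at hpair

lemma chiIco_mul_eq_zero_or_one (c y : ℝ) {z : ℝ} (hz : z = 0 ∨ z = 1) :
    chiIco c y * z = 0 ∨ chiIco c y * z = 1 := by
  unfold chiIco
  rcases hz with rfl | rfl <;> split_ifs <;> simp

lemma chiIco_mul_eq_one_iff {c y z : ℝ} (hz : z = 0 ∨ z = 1) :
    chiIco c y * z = 1 ↔ z = 1 ∧ y ∈ Ico 0 c := by
  unfold chiIco
  rcases hz with rfl | rfl <;> split_ifs <;> simp_all

lemma existsUnique_of_Mrow_eq_one {a b c t : ℝ} {x : ℤ → ℝ} (hx : ∀ k, x k = 0 ∨ x k = 1)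
    {j : ℤ} (h : Mrow a b c t x j = 1) :
    ∃! k : ℤ, x k = 1 ∧ t - j * a + k * b ∈ Ico 0 c :=
  (existsUnique_congr fun k => chiIco_mul_eq_one_iff (hx k)).mp
    (existsUnique_eq_one_of_tsum_eq_one (fun k => chiIco_mul_eq_zero_or_one _ _ (hx k)) h)

lemma Mrow_add_mul_shift (a b c t : ℝ) (x : ℤ → ℝ) (m j : ℤ) :
    Mrow a b c (t + m * b) (fun k => x (k + m)) j = Mrow a b c t x j := by
  unfold Mrow
  refine Eq.trans ?_ ((Equiv.addRight m).tsum_eq fun k => chiIco c (t - j * a + k * b) * x k)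
  congr 1
  ext k
  simp only [Equiv.coe_addRight, Int.cast_add]
  ring_nf

lemma add_mul_mem_Sset {a b c t : ℝ} {x : ℤ → ℝ} (hx : ∀ k, x k = 0 ∨ x k = 1)
    (hrow : ∀ j : ℤ, Mrow a b c t x j = 1) {m : ℤ} (hm : x m = 1) :
    t + m * b ∈ Sset a b c :=
  ⟨fun k => x (k + m), fun k => hx _, by simpa using hm,
    fun j => (Mrow_add_mul_shift a b c t x m j).trans (hrow j)⟩

lemma Mrow_window_cases {a b c c₀ t : ℝ} {q : ℤ} (hq : c₀ = c - q * b)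
    (h1 : b - a < c₀) (h2 : c₀ < a) (hab : a < b) (hac : a ≤ c)
    {x : ℤ → ℝ} (hx : ∀ k, x k = 0 ∨ x k = 1) (hx0 : x 0 = 1)
    (hrow : ∀ j : ℤ, Mrow a b c t x j = 1) {j : ℤ} (hj : t - j * a ∈ Ico c (c + a)) :
    (t - j * a < c + a - c₀ ∧ x (-q) = 1) ∨ (c + b - c₀ ≤ t - j * a ∧ x (-q - 1) = 1) := by
  set u := t - j * a
  obtain ⟨huc, hua⟩ := hj
  obtain ⟨k, ⟨hxk, hk0, hkc⟩, -⟩ := existsUnique_of_Mrow_eq_one hx (hrow j)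
  -- Row `j + 1` is already hit by `x 0`, and `k ≠ 0` because `u ≥ c`.
  have hnext : u - a + k * b < 0 := by
    obtain ⟨k₀, -, huniq⟩ := existsUnique_of_Mrow_eq_one hx (hrow (j + 1))
    have hshift (k' : ℤ) : t - ((j + 1 : ℤ) : ℝ) * a + k' * b = u - a + k' * b := by
      push_cast; ring
    have hk : k ≠ 0 := by
      rintro rfl
      simp only [Int.cast_zero, zero_mul, add_zero] at hkc
      linarith
    by_contra! hge
    refine hk ((huniq k ⟨hxk, ?_, ?_⟩).trans (huniq 0 ⟨hx0, ?_, ?_⟩).symm) <;>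
      rw [hshift] <;> norm_num <;> linarith
  obtain ⟨m, rfl⟩ : ∃ m : ℤ, k = m - q := ⟨k + q, by ring⟩
  have hkb : ((m - q : ℤ) : ℝ) * b = m * b - c + c₀ := by push_cast; rw [hq]; ring
  rw [hkb] at hk0 hkc hnext
  rcases (by omega : m ≤ -2 ∨ m = -1 ∨ m = 0 ∨ 1 ≤ m) with hm | rfl | rfl | hm
  · have : (m : ℝ) * b ≤ -2 * b := by
      gcongr
      · linarith
      · exact_mod_cast hm
    linarith
  · exact Or.inr ⟨by push_cast at hk0; linarith, by simpa [sub_eq_add_neg, add_comm] using hxk⟩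
  · exact Or.inl ⟨by push_cast at hnext; linarith, by simpa using hxk⟩
  · have : 1 * b ≤ (m : ℝ) * b := by
      gcongr
      · linarith
      · exact_mod_cast hm
    linarith

lemma notMem_Sset_of_mem_perSet_Ico {a b c c₀ t : ℝ} {q : ℤ} (hq : c₀ = c - q * b)
    (h1 : b - a < c₀) (h2 : c₀ < a) (hab : a < b) (hac : a ≤ c)
    (ht : t ∈ perSet a (Ico (c - c₀) (c + b - c₀ - a))) : t ∉ Sset a b c := by
  rintro ⟨x, hx, hx0, hrow⟩
  obtain ⟨j, hj₁, hj₂⟩ := ht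
  have hprev : t - ((j - 1 : ℤ) : ℝ) * a = t - j * a + a := by push_cast; ring
  rcases Mrow_window_cases hq h1 h2 hab hac hx hx0 hrow (j := j - 1)
      (by rw [hprev]; constructor <;> linarith) with ⟨h, -⟩ | ⟨h, -⟩ <;>
    rw [hprev] at h <;> linarith

lemma mem_Sset_of_Rmap_mem_Sset {a b c c₀ s : ℝ} (hc0 : c₀ = c - (⌊c / b⌋ : ℝ) * b)
    (h1 : b - a < c₀) (h2 : c₀ < a) (ha : 0 < a) (hab : a < b) (hac : a ≤ c)
    (h : Rmap a b c s ∈ Sset a b c) : s ∈ Sset a b c := by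
  obtain ⟨x, hx, hx0, hrow⟩ := h
  set t := Rmap a b c s with ht
  have hcases (j : ℤ) := Mrow_window_cases hc0 h1 h2 hab hac hx hx0 hrow (j := j)
  unfold Rmap at ht
  rw [← hc0] at ht
  split_ifs at ht with hr₁ hr₂
  · obtain ⟨j, hj₁, hj₂⟩ := hr₁
    rcases hcases j ⟨by linarith, by linarith⟩ with ⟨h, -⟩ | ⟨-, hxq⟩
    · linarith
    · convert add_mul_mem_Sset hx hrow hxq using 1
      push_cast
      linarith
  · exact ht ▸ ⟨x, hx, hx0, hrow⟩
  · obtain ⟨j, ⟨hj₁, hj₂⟩, -⟩ := existsUnique_sub_zsmul_mem_Ico ha s 0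
    simp only [zsmul_eq_mul, zero_add] at hj₁ hj₂
    have hj₃ : c₀ ≤ s - j * a := by
      by_contra! hlt
      by_cases hj₄ : s - j * a < c₀ + a - b
      · exact hr₁ ⟨j, hj₁, hj₄⟩
      · exact hr₂ ⟨j, not_lt.mp hj₄, hlt⟩
    rcases hcases j ⟨by linarith, by linarith⟩ with ⟨-, hxq⟩ | ⟨h, -⟩
    · convert add_mul_mem_Sset hx hrow hxq using 1
      push_cast
      linarith
    · linarith

/-- Proposition `blackholestwo`: with `c₀ = c − ⌊c/b⌋·b` and `b − a < c₀ < a`, for every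
`n ≥ 0` the image `(R_{a,b,c})ⁿ([c−c₀, c+b−c₀−a) + aℤ)` is disjoint from `S_{a,b,c}`. -/
theorem iterated_blackhole_disjoint_from_S (a b c c₀ : ℝ)
    (ha : 0 < a) (hab : a < b) (hbc : b < c)
    (hc0 : c₀ = c - (⌊c / b⌋ : ℝ) * b) (h1 : b - a < c₀) (h2 : c₀ < a) :
    ∀ n : ℕ,
      ((Rmap a b c)^[n] '' perSet a (Set.Ico (c - c₀) (c + b - c₀ - a))) ∩ Sset a b c
        = ∅ := by
  have hac : a ≤ c := (hab.trans hbc).le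
  have hinv : MapsTo (Rmap a b c) (Sset a b c)ᶜ (Sset a b c)ᶜ :=
    fun s hs hRs => hs (mem_Sset_of_Rmap_mem_Sset hc0 h1 h2 ha hab hac hRs)
  have hblackhole : perSet a (Ico (c - c₀) (c + b - c₀ - a)) ⊆ (Sset a b c)ᶜ :=
    fun t ht => notMem_Sset_of_mem_perSet_Ico hc0 h1 h2 hab hac ht
  intro n
  exact disjoint_iff_inter_eq_empty.mp <| subset_compl_iff_disjoint_right.mp <|
    (hinv.iterate n).image_subset.trans' (image_mono hblackhole)
end

section
/- Let (a,b,c) be a triple of positive real numbers with a < b < c and b − a < c₀ < a, where c₀ := c − ⌊c/b⌋·b. Then: (i) S_{a,b,c} satisfies R_{a,b,c}(S_{a,b,c}) ⊆ S_{a,b,c} and R̃_{a,b,c}(S_{a,b,c}) ⊆ S_{a,b,c} and is disjoint from the black holes [c₀+a−b, c₀) + aℤ and [c−c₀, c+b−c₀−a) + aℤ, and S_{a,b,c} is maximal with these properties: every set E ⊆ ℝ with R_{a,b,c}(E) ⊆ E, R̃_{a,b,c}(E) ⊆ E, and E ∩ (([c₀+a−b, c₀) ∪ [c−c₀, c+b−c₀−a))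 + aℤ) = ∅ satisfies E ⊆ S_{a,b,c}. (ii) The complement ℝ∖S_{a,b,c} satisfies R_{a,b,c}(ℝ∖S_{a,b,c}) ⊆ ℝ∖S_{a,b,c} and R̃_{a,b,c}(ℝ∖S_{a,b,c}) ⊆ ℝ∖S_{a,b,c} and contains both black holes, and it is minimal with these properties: every set F ⊆ ℝ with R_{a,b,c}(F) ⊆ F, R̃_{a,b,c}(F) ⊆ F, and (([c₀+a−b, c₀) ∪ [c−c₀, c+b−c₀−a)) + aℤ) ⊆ F satisfies ℝ∖S_{a,b,c} ⊆ F. -/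
open MeasureTheory Set

/-!
Encode a binary vector `x` at `t` by the point set `T = {t + λ : x(λ) = 1}`. Then `t ∈ S_{a,b,c}`
says that `t ∈ T ⊆ t + bℤ` and that every window `[μ, μ + c)`, `μ ∈ aℤ`, contains exactly one
point of `T`. In such a set the point `w` following `v` is characterised by `w ∈ v + bℤ` and
`⌊(w - c)/a⌋ = ⌊v/a⌋`. Because `b − a < c₀ < a < b`, this relation is the graph of `R_{a,b,c}`
off its black hole and the inverse graph of `R̃_{a,b,c}` off its black hole, and it has no
solution in `w` (resp. `v`) on the black hole of `R_{a,b,c}` (resp. `R̃_{a,b,c}`). So `S` is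
invariant and avoids both black holes, `R̃ ∘ R` and `R ∘ R̃` are the identity off the respective
black hole, and a point whose forward `R`-orbit and backward `R̃`-orbit avoid the black holes has
a two-sided orbit that is such a point set. Maximality and minimality follow formally from these
facts.
-/

theorem tsum_eq_one_iff_existsUnique {ι : Type*} {f : ι → ℝ} (hf : ∀ i, f i = 0 ∨ f i = 1) :
    ∑' i, f i = 1 ↔ ∃! i, f i = 1 := by
  classical
  have hnonneg : ∀ i, 0 ≤ f i := fun i => by rcases hf i with h | h <;> simp [h]
  constructor
  · intro hsum
    have hsummable : Summable f := by
      by_contra h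
      rw [tsum_eq_zero_of_not_summable h] at hsum
      exact zero_ne_one hsum
    obtain ⟨i, hi⟩ : ∃ i, f i = 1 := by
      by_contra! h
      rw [tsum_congr fun i => (hf i).resolve_right (h i), tsum_zero] at hsum
      exact zero_ne_one hsum
    refine ⟨i, hi, fun i' hi' => by_contra fun hne => ?_⟩
    have := hsummable.sum_le_tsum {i', i} fun k _ => hnonneg k
    rw [Finset.sum_pair hne, hi, hi', hsum] at this
    norm_num at this
  · rintro ⟨i, hi, huniq⟩
    rw [tsum_eq_single i fun i' hne => (hf i').resolve_right fun h => hne (huniq i' h), hi]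

theorem StrictMono.existsUnique_lt_le {β : ℤ → ℤ} (hβ : StrictMono β) (j : ℤ) :
    ∃! n, β (n - 1) < j ∧ j ≤ β n := by
  have hmono : Monotone fun n => β n - n :=
    monotone_int_of_le_succ fun n => by have := hβ (lt_add_one n); omega
  have hup : ∀ n, 0 ≤ n → β 0 + n ≤ β n := fun n hn => by
    have : β 0 - 0 ≤ β n - n := hmono hn
    omega
  have hlo : ∀ n, n ≤ 0 → β n ≤ β 0 + n := fun n hn => by
    have : β n - n ≤ β 0 - 0 := hmono hn
    omega
  obtain ⟨n, hn, hleast⟩ := Int.exists_least_of_bdd (P := fun n => j ≤ β n)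
    ⟨min 0 (j - β 0), fun z hz => by by_contra h; have := hlo z (by omega); omega⟩
    ⟨max 0 (j - β 0), by have := hup _ (le_max_left 0 (j - β 0)); omega⟩
  have hn' : β (n - 1) < j := lt_of_not_ge fun h => by have := hleast _ h; omega
  refine ⟨n, ⟨hn', hn⟩, fun m ⟨hm₁, hm₂⟩ => ?_⟩
  have h₁ : ¬ m < n := fun h => by have := hβ.monotone (show m ≤ n - 1 by omega); omega
  have h₂ : ¬ n < m := fun h => by have := hβ.monotone (show n ≤ m - 1 by omega); omega
  omega

section InvariantSets

variable {α : Type*} {f g : α → α} {B B₁ B₂ S E F : Set α}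

theorem subset_of_mapsTo_of_disjoint
    (hS : ∀ t, (∀ n, f^[n] t ∉ B₁) → (∀ n, g^[n] t ∉ B₂) → t ∈ S)
    (hfE : MapsTo f E E) (hgE : MapsTo g E E) (hE : Disjoint E (B₁ ∪ B₂)) : E ⊆ S :=
  fun t ht => hS t
    (fun n hn => disjoint_left.1 hE (hfE.iterate n ht) (Or.inl hn))
    (fun n hn => disjoint_left.1 hE (hgE.iterate n ht) (Or.inr hn))

theorem mapsTo_compl_of_leftInvOn (hgS : MapsTo g S S) (hfix : ∀ t ∈ B, f t = t)
    (hinv : LeftInvOn g f Bᶜ) : MapsTo f Sᶜ Sᶜ := fun t ht hft => by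
  by_cases hB : t ∈ B
  · rw [hfix t hB] at hft
    exact ht hft
  · exact ht (hinv hB ▸ hgS hft)

theorem mem_of_iterate_mem (hinv : LeftInvOn g f Bᶜ) (hgF : MapsTo g F F) (hB : B ⊆ F) :
    ∀ n t, f^[n] t ∈ B → t ∈ F := by
  intro n
  induction n with
  | zero => exact fun t ht => hB ht
  | succ n ih =>
    intro t ht
    by_cases htB : t ∈ B
    · exact hB htB
    · exact hinv htB ▸ hgF (ih (f t) ht)

theorem compl_subset_of_mapsTo
    (hS : ∀ t, (∀ n, f^[n] t ∉ B₁) → (∀ n, g^[n] t ∉ B₂) → t ∈ S)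
    (hinv₁ : LeftInvOn g f B₁ᶜ) (hinv₂ : LeftInvOn f g B₂ᶜ)
    (hfF : MapsTo f F F) (hgF : MapsTo g F F) (hB : B₁ ∪ B₂ ⊆ F) : Sᶜ ⊆ F := by
  intro t ht
  by_contra htF
  exact ht <| hS t
    (fun n hn => htF (mem_of_iterate_mem hinv₁ hgF (subset_union_left.trans hB) n t hn))
    (fun n hn => htF (mem_of_iterate_mem hinv₂ hfF (subset_union_right.trans hB) n t hn))

end InvariantSets

section Orbit

variable {α : Type*} {f g : α → α} {t : α}

def twoSidedOrbit (f g : α → α) (t : α) : ℤ → α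
  | (n : ℕ) => f^[n] t
  | Int.negSucc n => g^[n + 1] t

theorem twoSidedOrbit_rel {r : α → α → Prop} (hf : ∀ n : ℕ, r (f^[n] t) (f (f^[n] t)))
    (hg : ∀ n : ℕ, r (g (g^[n] t)) (g^[n] t)) (n : ℤ) :
    r (twoSidedOrbit f g t n) (twoSidedOrbit f g t (n + 1)) := by
  match n with
  | (n : ℕ) =>
    show r (f^[n] t) (f^[n + 1] t)
    exact (Function.iterate_succ_apply' f n t).symm ▸ hf n
  | Int.negSucc 0 => exact hg 0
  | Int.negSucc (n + 1) =>
    show r (g^[n + 2] t) (g^[n + 1] t)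
    exact (Function.iterate_succ_apply' g (n + 1) t).symm ▸ hg (n + 1)

end Orbit

theorem exists_eq_add_int_mul_of_succ {b : ℝ} {o : ℤ → ℝ}
    (ho : ∀ n, ∃ k : ℤ, o (n + 1) = o n + k * b) (m n : ℤ) : ∃ k : ℤ, o n = o m + k * b := by
  have hfrom0 : ∀ n, ∃ k : ℤ, o n = o 0 + k * b := by
    intro n
    induction n using Int.induction_on with
    | zero => exact ⟨0, by simp⟩
    | succ n ih =>
      obtain ⟨k, hk⟩ := ih
      obtain ⟨l, hl⟩ := ho n
      exact ⟨k + l, by rw [hl, hk]; push_cast; ring⟩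
    | pred n ih =>
      obtain ⟨k, hk⟩ := ih
      obtain ⟨l, hl⟩ := ho (-n - 1)
      rw [sub_add_cancel] at hl
      exact ⟨k - l, by push_cast; linarith⟩
  obtain ⟨k, hk⟩ := hfrom0 m
  obtain ⟨l, hl⟩ := hfrom0 n
  exact ⟨l - k, by push_cast; linarith⟩

theorem int_eq_zero_of_neg_lt_mul_of_mul_lt {m : ℤ} {b : ℝ} (h₁ : -b < m * b) (h₂ : m * b < b) :
    m = 0 := by
  have hb : 0 < b := by linarith
  have hlo : ((-1 : ℤ) : ℝ) < m := lt_of_mul_lt_mul_right (by push_cast; linarith) hb.le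
  have hhi : (m : ℝ) < (1 : ℤ) := lt_of_mul_lt_mul_right (by push_cast; linarith) hb.le
  have := Int.cast_lt.1 hlo
  have := Int.cast_lt.1 hhi
  omega

theorem floor_div_eq_iff {a v : ℝ} {j : ℤ} (ha : 0 < a) :
    ⌊v / a⌋ = j ↔ v ∈ Ico (j * a) (j * a + a) := by
  rw [Int.floor_eq_iff, le_div_iff₀ ha, div_lt_iff₀ ha, add_mul, one_mul, mem_Ico]

theorem perSet_union (a : ℝ) (X Y : Set ℝ) :
    perSet a (X ∪ Y) = perSet a X ∪ perSet a Y := by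
  ext t
  simp only [perSet, mem_union, mem_ofPred_eq, exists_or]

theorem perSet_disjoint {a p : ℝ} {X Y : Set ℝ} (ha : 0 < a) (hX : X ⊆ Ico p (p + a))
    (hY : Y ⊆ Ico p (p + a)) (hXY : Disjoint X Y) : Disjoint (perSet a X) (perSet a Y) := by
  rw [disjoint_left]
  rintro t ⟨j, hj⟩ ⟨k, hk⟩
  obtain rfl : j = k := (existsUnique_sub_zsmul_mem_Ico ha t p).unique
    (by simpa only [zsmul_eq_mul] using hX hj) (by simpa only [zsmul_eq_mul] using hY hk)
  exact disjoint_left.1 hXY hj hk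

theorem Mrow_eq_one_iff {a b c t : ℝ} {x : ℤ → ℝ} (hx : ∀ k, x k = 0 ∨ x k = 1) (j : ℤ) :
    Mrow a b c t x j = 1 ↔ ∃! k, x k = 1 ∧ t + k * b ∈ Ico (j * a) (j * a + c) := by
  have hterm : ∀ k : ℤ, chiIco c (t - j * a + k * b) * x k =
      if x k = 1 ∧ t + k * b ∈ Ico (j * a) (j * a + c) then 1 else 0 := fun k => by
    have hwin : (0 ≤ t - j * a + k * b ∧ t - j * a + k * b < c) ↔
        t + k * b ∈ Ico (j * a) (j * a + c) := by
      rw [mem_Ico]; constructor <;> rintro ⟨h₁, h₂⟩ <;> constructor <;> linarith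
    rcases hx k with h | h <;> simp only [chiIco, hwin, h] <;> split_ifs <;> simp_all
  unfold Mrow
  simp_rw [hterm]
  rw [tsum_eq_one_iff_existsUnique fun k => by split_ifs <;> simp]
  simp

/-- A point set `T ⊆ ℝ` encodes a binary vector `x` at `t` through `T = {t + λ : x(λ) = 1}`;
then `M_{a,b,c}(t)x = 1` says that every window `[μ, μ + c)`, `μ ∈ aℤ`, contains exactly one
point of `T`. -/
def IsAdmissible (a b c : ℝ) (T : Set ℝ) : Prop :=
  (∀ p ∈ T, ∀ q ∈ T, ∃ k : ℤ, q = p + k * b) ∧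
    ∀ j : ℤ, ∃! p, p ∈ T ∧ p ∈ Ico (j * a) (j * a + c)

theorem mem_Sset_iff {a b c t : ℝ} (hb : b ≠ 0) :
    t ∈ Sset a b c ↔ ∃ T, t ∈ T ∧ IsAdmissible a b c T := by
  classical
  constructor
  · rintro ⟨x, hx, hx0, hrow⟩
    refine ⟨{p | ∃ k, x k = 1 ∧ p = t + k * b}, ⟨0, hx0, by simp⟩, ?_, fun j => ?_⟩
    · rintro _ ⟨k, -, rfl⟩ _ ⟨k', -, rfl⟩
      exact ⟨k' - k, by push_cast; ring⟩
    · obtain ⟨k, ⟨hk, hkj⟩, huniq⟩ := (Mrow_eq_one_iff hx j).1 (hrow j)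
      refine ⟨t + k * b, ⟨⟨k, hk, rfl⟩, hkj⟩, ?_⟩
      rintro _ ⟨⟨k', hk', rfl⟩, hk'j⟩
      rw [huniq k' ⟨hk', hk'j⟩]
  · rintro ⟨T, htT, hlat, hwin⟩
    have hx : ∀ k : ℤ, (if t + k * b ∈ T then (1 : ℝ) else 0) = 0 ∨
        (if t + k * b ∈ T then (1 : ℝ) else 0) = 1 := fun k => by split_ifs <;> simp
    refine ⟨fun k => if t + k * b ∈ T then 1 else 0, hx, by simp [htT], fun j => ?_⟩
    rw [Mrow_eq_one_iff hx]
    obtain ⟨p, ⟨hpT, hpj⟩, huniq⟩ := hwin j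
    obtain ⟨k, rfl⟩ := hlat t htT p hpT
    refine ⟨k, ⟨by simp [hpT], hpj⟩, fun k' ⟨hk', hk'j⟩ => ?_⟩
    have hk'T : t + k' * b ∈ T := by by_contra h; simp [h] at hk'
    exact_mod_cast mul_right_cancel₀ hb (add_left_cancel (huniq _ ⟨hk'T, hk'j⟩))

/-- `w` is the point of an admissible set that follows `v`. -/
def IsNext (a b c v w : ℝ) : Prop :=
  (∃ k : ℤ, w = v + k * b) ∧ ⌊(w - c) / a⌋ = ⌊v / a⌋

section IsNext

variable {a b c v v' w w' : ℝ}

theorem IsNext.right_unique (ha : 0 < a) (hab : a ≤ b) (h : IsNext a b c v w)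
    (h' : IsNext a b c v w') : w = w' := by
  obtain ⟨⟨k, rfl⟩, hw⟩ := h
  obtain ⟨⟨k', rfl⟩, hw'⟩ := h'
  obtain ⟨h₁, h₂⟩ := (floor_div_eq_iff ha).1 hw
  obtain ⟨h₁', h₂'⟩ := (floor_div_eq_iff ha).1 hw'
  have : k - k' = 0 :=
    int_eq_zero_of_neg_lt_mul_of_mul_lt (b := b) (by push_cast; linarith) (by push_cast; linarith)
  rw [sub_eq_zero.1 this]

theorem IsNext.left_unique (ha : 0 < a) (hab : a ≤ b) (h : IsNext a b c v w)
    (h' : IsNext a b c v' w) : v = v' := by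
  obtain ⟨⟨k, hk⟩, hv⟩ := h
  obtain ⟨⟨k', hk'⟩, hv'⟩ := h'
  obtain ⟨h₁, h₂⟩ := (floor_div_eq_iff ha).1 hv.symm
  obtain ⟨h₁', h₂'⟩ := (floor_div_eq_iff ha).1 hv'.symm
  have : k - k' = 0 :=
    int_eq_zero_of_neg_lt_mul_of_mul_lt (b := b) (by push_cast; linarith) (by push_cast; linarith)
  rw [sub_eq_zero.1 this] at hk
  linarith

end IsNext

section Admissible

variable {a b c : ℝ} {T : Set ℝ}

theorem IsAdmissible.exists_isNext (hT : IsAdmissible a b c T) (ha : 0 < a) {p : ℝ}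
    (hp : p ∈ T) : ∃ q ∈ T, IsNext a b c p q := by
  obtain ⟨hp₁, hp₂⟩ := (floor_div_eq_iff ha).1 (rfl : ⌊p / a⌋ = ⌊p / a⌋)
  set j := ⌊p / a⌋
  obtain ⟨q, ⟨hqT, hq₁, hq₂⟩, -⟩ := hT.2 (j + 1)
  push_cast at hq₁ hq₂
  have hq : j * a + c ≤ q := by
    by_contra h
    have := (hT.2 j).unique ⟨hqT, by constructor <;> linarith⟩ ⟨hp, by constructor <;> linarith⟩
    linarith
  exact ⟨q, hqT, hT.1 p hp q hqT, (floor_div_eq_iff ha).2 ⟨by linarith, by linarith⟩⟩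

theorem IsAdmissible.exists_isNext_left (hT : IsAdmissible a b c T) (ha : 0 < a) {q : ℝ}
    (hq : q ∈ T) : ∃ p ∈ T, IsNext a b c p q := by
  obtain ⟨hq₁, hq₂⟩ := (floor_div_eq_iff ha).1 (rfl : ⌊(q - c) / a⌋ = ⌊(q - c) / a⌋)
  set j := ⌊(q - c) / a⌋
  obtain ⟨p, ⟨hpT, hp₁, hp₂⟩, -⟩ := hT.2 j
  have hp : p < j * a + a := by
    by_contra h
    have := (hT.2 (j + 1)).unique ⟨hpT, by push_cast; constructor <;> linarith⟩
      ⟨hq, by push_cast; constructor <;> linarith⟩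
    linarith
  exact ⟨p, hpT, hT.1 p hpT q hq, ((floor_div_eq_iff ha).2 ⟨hp₁, hp⟩).symm⟩

theorem isAdmissible_range (ha : 0 < a) (hac : a ≤ c) {o : ℤ → ℝ}
    (ho : ∀ n, IsNext a b c (o n) (o (n + 1))) : IsAdmissible a b c (range o) := by
  have hstep : ∀ n, ⌊o n / a⌋ < ⌊o (n + 1) / a⌋ := fun n => by
    have h₁ := Int.sub_one_lt_floor (o (n + 1) / a)
    have h₂ : 1 ≤ c / a := (one_le_div ha).2 hac
    rw [← (ho n).2, Int.floor_lt, sub_div]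
    linarith
  have hwin : ∀ (j : ℤ) n,
      o n ∈ Ico (j * a) (j * a + c) ↔ ⌊o (n - 1) / a⌋ < j ∧ j ≤ ⌊o n / a⌋ := by
    intro j n
    rw [← (ho (n - 1)).2, sub_add_cancel, Int.floor_lt, Int.le_floor, div_lt_iff₀ ha,
      le_div_iff₀ ha, mem_Ico]
    constructor <;> rintro ⟨h₁, h₂⟩ <;> constructor <;> linarith
  refine ⟨?_, fun j => ?_⟩
  · rintro _ ⟨m, rfl⟩ _ ⟨n, rfl⟩
    exact exists_eq_add_int_mul_of_succ (fun n => (ho n).1) m n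
  · obtain ⟨n, hn, huniq⟩ := (strictMono_int_of_lt_succ hstep).existsUnique_lt_le j
    refine ⟨o n, ⟨mem_range_self n, (hwin j n).2 hn⟩, ?_⟩
    rintro _ ⟨⟨m, rfl⟩, hm⟩
    rw [huniq m ((hwin j m).1 hm)]

end Admissible

section Transformations

variable {a b c c₀ v w : ℝ}

theorem Rmap_eq_of_mem_left (hc0 : c₀ = c - ⌊c / b⌋ * b)
    (hv : v ∈ perSet a (Ico 0 (c₀ + a - b))) : Rmap a b c v = v + ⌊c / b⌋ * b + b := by
  rw [Rmap, ← hc0, if_pos hv]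

theorem Rmap_eq_self_of_mem_blackHole (ha : 0 < a) (hab : a < b) (hc0 : c₀ = c - ⌊c / b⌋ * b)
    (h1 : b - a < c₀) (h2 : c₀ < a) (hv : v ∈ perSet a (Ico (c₀ + a - b) c₀)) :
    Rmap a b c v = v := by
  have hleft : v ∉ perSet a (Ico 0 (c₀ + a - b)) := disjoint_right.1
    (perSet_disjoint ha (p := 0) (Ico_subset_Ico le_rfl (by linarith))
      (Ico_subset_Ico (by linarith) (by linarith)) Ico_disjoint_Ico_same) hv
  rw [Rmap, ← hc0, if_neg hleft, if_pos hv]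

theorem Rmap_eq_of_mem_right (ha : 0 < a) (hab : a < b) (hc0 : c₀ = c - ⌊c / b⌋ * b)
    (h1 : b - a < c₀) (h2 : c₀ < a) (hv : v ∈ perSet a (Ico c₀ a)) :
    Rmap a b c v = v + ⌊c / b⌋ * b := by
  have hsub : Ico c₀ a ⊆ Ico 0 (0 + a) := Ico_subset_Ico (by linarith) (by linarith)
  have hleft : v ∉ perSet a (Ico 0 (c₀ + a - b)) := disjoint_right.1
    (perSet_disjoint ha (Ico_subset_Ico le_rfl (by linarith)) hsub
      ((Ico_disjoint_Ico_same (b := c₀)).mono_left (Ico_subset_Ico le_rfl (by linarith)))) hv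
  have hmid : v ∉ perSet a (Ico (c₀ + a - b) c₀) := disjoint_right.1
    (perSet_disjoint ha (Ico_subset_Ico (by linarith) (by linarith)) hsub
      Ico_disjoint_Ico_same) hv
  rw [Rmap, ← hc0, if_neg hleft, if_neg hmid]

theorem isNext_Rmap (ha : 0 < a) (hab : a < b) (hc0 : c₀ = c - ⌊c / b⌋ * b)
    (h1 : b - a < c₀) (h2 : c₀ < a) (hv : v ∉ perSet a (Ico (c₀ + a - b) c₀)) :
    IsNext a b c v (Rmap a b c v) := by
  obtain ⟨h₁, h₂⟩ := (floor_div_eq_iff ha).1 (rfl : ⌊v / a⌋ = ⌊v / a⌋)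
  set j := ⌊v / a⌋
  have hq : (⌊c / b⌋ : ℝ) * b = c - c₀ := by rw [hc0]; ring
  by_cases hs : v - j * a < c₀ + a - b
  · rw [Rmap_eq_of_mem_left hc0 ⟨j, by linarith, hs⟩]
    exact ⟨⟨⌊c / b⌋ + 1, by push_cast; ring⟩, (floor_div_eq_iff ha).2 ⟨by linarith, by linarith⟩⟩
  · have hs' : c₀ ≤ v - j * a := by
      by_contra h
      exact hv ⟨j, by linarith, by linarith⟩
    rw [Rmap_eq_of_mem_right ha hab hc0 h1 h2 ⟨j, hs', by linarith⟩]
    exact ⟨⟨⌊c / b⌋, rfl⟩, (floor_div_eq_iff ha).2 ⟨by linarith, by linarith⟩⟩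

theorem IsNext.notMem_perSet_left (ha : 0 < a) (hc0 : c₀ = c - ⌊c / b⌋ * b)
    (h1 : b - a < c₀) (h2 : c₀ < a) (h : IsNext a b c v w) :
    v ∉ perSet a (Ico (c₀ + a - b) c₀) := by
  rintro ⟨j, hj₁, hj₂⟩
  obtain ⟨⟨k, rfl⟩, hw⟩ := h
  rw [(floor_div_eq_iff (v := v) (j := j) ha).2 ⟨by linarith, by linarith⟩] at hw
  obtain ⟨h₁, h₂⟩ := (floor_div_eq_iff ha).1 hw
  have hq : (⌊c / b⌋ : ℝ) * b = c - c₀ := by rw [hc0]; ring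
  have hk := int_eq_zero_of_neg_lt_mul_of_mul_lt (m := k - ⌊c / b⌋) (b := b)
    (by push_cast; linarith) (by push_cast; linarith)
  rw [sub_eq_zero.1 hk] at h₁
  linarith

theorem isNext_iff_Rmap (ha : 0 < a) (hab : a < b) (hc0 : c₀ = c - ⌊c / b⌋ * b)
    (h1 : b - a < c₀) (h2 : c₀ < a) :
    IsNext a b c v w ↔ v ∉ perSet a (Ico (c₀ + a - b) c₀) ∧ w = Rmap a b c v := by
  refine ⟨fun h => ?_, fun ⟨hv, hw⟩ => hw ▸ isNext_Rmap ha hab hc0 h1 h2 hv⟩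
  have hv := h.notMem_perSet_left ha hc0 h1 h2
  exact ⟨hv, h.right_unique ha hab.le (isNext_Rmap ha hab hc0 h1 h2 hv)⟩

theorem Rtil_eq_of_mem_left (hc0 : c₀ = c - ⌊c / b⌋ * b)
    (hw : w ∈ perSet a (Ico (c - a) (c - c₀))) : Rtil a b c w = w - ⌊c / b⌋ * b := by
  rw [Rtil, ← hc0, if_pos hw]

theorem Rtil_eq_self_of_mem_blackHole (ha : 0 < a) (hab : a < b) (hc0 : c₀ = c - ⌊c / b⌋ * b)
    (h1 : b - a < c₀) (h2 : c₀ < a) (hw : w ∈ perSet a (Ico (c - c₀) (c + b - c₀ - a))) :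
    Rtil a b c w = w := by
  have hleft : w ∉ perSet a (Ico (c - a) (c - c₀)) := disjoint_right.1
    (perSet_disjoint ha (p := c - a) (Ico_subset_Ico le_rfl (by linarith))
      (Ico_subset_Ico (by linarith) (by linarith)) Ico_disjoint_Ico_same) hw
  rw [Rtil, ← hc0, if_neg hleft, if_pos hw]

theorem Rtil_eq_of_mem_right (ha : 0 < a) (hab : a < b) (hc0 : c₀ = c - ⌊c / b⌋ * b)
    (h1 : b - a < c₀) (h2 : c₀ < a) (hw : w ∈ perSet a (Ico (c + b - c₀ - a) c)) :
    Rtil a b c w = w - ⌊c / b⌋ * b - b := by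
  have hsub : Ico (c + b - c₀ - a) c ⊆ Ico (c - a) (c - a + a) :=
    Ico_subset_Ico (by linarith) (by linarith)
  have hleft : w ∉ perSet a (Ico (c - a) (c - c₀)) := disjoint_right.1
    (perSet_disjoint ha (Ico_subset_Ico le_rfl (by linarith)) hsub
      ((Ico_disjoint_Ico_same (b := c - c₀)).mono_right
        (Ico_subset_Ico (by linarith) le_rfl))) hw
  have hmid : w ∉ perSet a (Ico (c - c₀) (c + b - c₀ - a)) := disjoint_right.1
    (perSet_disjoint ha (Ico_subset_Ico (by linarith) (by linarith)) hsub
      Ico_disjoint_Ico_same) hw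
  rw [Rtil, ← hc0, if_neg hleft, if_neg hmid]

theorem isNext_Rtil (ha : 0 < a) (hab : a < b) (hc0 : c₀ = c - ⌊c / b⌋ * b)
    (h1 : b - a < c₀) (h2 : c₀ < a) (hw : w ∉ perSet a (Ico (c - c₀) (c + b - c₀ - a))) :
    IsNext a b c (Rtil a b c w) w := by
  obtain ⟨h₁, h₂⟩ := (floor_div_eq_iff ha).1 (rfl : ⌊(w - c) / a⌋ = ⌊(w - c) / a⌋)
  set j := ⌊(w - c) / a⌋
  have hq : (⌊c / b⌋ : ℝ) * b = c - c₀ := by rw [hc0]; ring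
  by_cases hu : w - (j + 1) * a < c - c₀
  · rw [Rtil_eq_of_mem_left hc0 ⟨j + 1, by push_cast; linarith, by push_cast; linarith⟩]
    exact ⟨⟨⌊c / b⌋, by ring⟩, ((floor_div_eq_iff ha).2 ⟨by linarith, by linarith⟩).symm⟩
  · have hu' : c + b - c₀ - a ≤ w - (j + 1) * a := by
      by_contra h
      exact hw ⟨j + 1, by push_cast; linarith, by push_cast; linarith⟩
    rw [Rtil_eq_of_mem_right ha hab hc0 h1 h2
      ⟨j + 1, by push_cast; linarith, by push_cast; linarith⟩]
    exact ⟨⟨⌊c / b⌋ + 1, by push_cast; ring⟩,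
      ((floor_div_eq_iff ha).2 ⟨by linarith, by linarith⟩).symm⟩

theorem IsNext.notMem_perSet_right (ha : 0 < a) (hc0 : c₀ = c - ⌊c / b⌋ * b)
    (h1 : b - a < c₀) (h2 : c₀ < a) (h : IsNext a b c v w) :
    w ∉ perSet a (Ico (c - c₀) (c + b - c₀ - a)) := by
  rintro ⟨i, hi₁, hi₂⟩
  obtain ⟨⟨k, rfl⟩, hv⟩ := h
  rw [(floor_div_eq_iff (v := v + k * b - c) (j := i - 1) ha).2
    ⟨by push_cast; linarith, by push_cast; linarith⟩] at hv
  obtain ⟨h₁, h₂⟩ := (floor_div_eq_iff ha).1 hv.symm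
  push_cast at h₁ h₂
  have hq : (⌊c / b⌋ : ℝ) * b = c - c₀ := by rw [hc0]; ring
  have hk := int_eq_zero_of_neg_lt_mul_of_mul_lt (m := k - ⌊c / b⌋) (b := b)
    (by push_cast; linarith) (by push_cast; linarith)
  rw [sub_eq_zero.1 hk] at hi₁
  linarith

theorem isNext_iff_Rtil (ha : 0 < a) (hab : a < b) (hc0 : c₀ = c - ⌊c / b⌋ * b)
    (h1 : b - a < c₀) (h2 : c₀ < a) :
    IsNext a b c v w ↔ w ∉ perSet a (Ico (c - c₀) (c + b - c₀ - a)) ∧ v = Rtil a b c w := by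
  refine ⟨fun h => ?_, fun ⟨hw, hv⟩ => hv ▸ isNext_Rtil ha hab hc0 h1 h2 hw⟩
  have hw := h.notMem_perSet_right ha hc0 h1 h2
  exact ⟨hw, h.left_unique ha hab.le (isNext_Rtil ha hab hc0 h1 h2 hw)⟩

end Transformations

section Sset

variable {a b c c₀ t : ℝ}

theorem exists_isNext_of_mem_Sset (ha : 0 < a) (hab : a < b) (ht : t ∈ Sset a b c) :
    ∃ q ∈ Sset a b c, IsNext a b c t q := by
  have hb : b ≠ 0 := (ha.trans hab).ne'
  obtain ⟨T, htT, hT⟩ := (mem_Sset_iff hb).1 ht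
  obtain ⟨q, hqT, hq⟩ := hT.exists_isNext ha htT
  exact ⟨q, (mem_Sset_iff hb).2 ⟨T, hqT, hT⟩, hq⟩

theorem exists_isNext_left_of_mem_Sset (ha : 0 < a) (hab : a < b) (ht : t ∈ Sset a b c) :
    ∃ p ∈ Sset a b c, IsNext a b c p t := by
  have hb : b ≠ 0 := (ha.trans hab).ne'
  obtain ⟨T, htT, hT⟩ := (mem_Sset_iff hb).1 ht
  obtain ⟨p, hpT, hp⟩ := hT.exists_isNext_left ha htT
  exact ⟨p, (mem_Sset_iff hb).2 ⟨T, hpT, hT⟩, hp⟩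

theorem mem_Sset_of_forall_iterate_notMem (ha : 0 < a) (hab : a < b) (hbc : b < c)
    (hc0 : c₀ = c - ⌊c / b⌋ * b) (h1 : b - a < c₀) (h2 : c₀ < a)
    (hR : ∀ n, (Rmap a b c)^[n] t ∉ perSet a (Ico (c₀ + a - b) c₀))
    (hR' : ∀ n, (Rtil a b c)^[n] t ∉ perSet a (Ico (c - c₀) (c + b - c₀ - a))) :
    t ∈ Sset a b c :=
  (mem_Sset_iff (ha.trans hab).ne').2 ⟨range (twoSidedOrbit (Rmap a b c) (Rtil a b c) t),
    ⟨0, rfl⟩, isAdmissible_range ha (by linarith)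
      (twoSidedOrbit_rel (fun n => (isNext_iff_Rmap ha hab hc0 h1 h2).2 ⟨hR n, rfl⟩)
        (fun n => (isNext_iff_Rtil ha hab hc0 h1 h2).2 ⟨hR' n, rfl⟩))⟩

theorem mapsTo_Rmap_Sset (ha : 0 < a) (hab : a < b) (hc0 : c₀ = c - ⌊c / b⌋ * b)
    (h1 : b - a < c₀) (h2 : c₀ < a) : MapsTo (Rmap a b c) (Sset a b c) (Sset a b c) :=
  fun _ ht => by
    obtain ⟨q, hq, hnext⟩ := exists_isNext_of_mem_Sset ha hab ht
    rwa [((isNext_iff_Rmap ha hab hc0 h1 h2).1 hnext).2] at hq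

theorem mapsTo_Rtil_Sset (ha : 0 < a) (hab : a < b) (hc0 : c₀ = c - ⌊c / b⌋ * b)
    (h1 : b - a < c₀) (h2 : c₀ < a) : MapsTo (Rtil a b c) (Sset a b c) (Sset a b c) :=
  fun _ ht => by
    obtain ⟨p, hp, hnext⟩ := exists_isNext_left_of_mem_Sset ha hab ht
    rwa [((isNext_iff_Rtil ha hab hc0 h1 h2).1 hnext).2] at hp

theorem disjoint_Sset_perSet (ha : 0 < a) (hab : a < b) (hc0 : c₀ = c - ⌊c / b⌋ * b)
    (h1 : b - a < c₀) (h2 : c₀ < a) :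
    Disjoint (Sset a b c)
      (perSet a (Ico (c₀ + a - b) c₀) ∪ perSet a (Ico (c - c₀) (c + b - c₀ - a))) := by
  refine disjoint_union_right.2 ⟨disjoint_left.2 fun t ht => ?_, disjoint_left.2 fun t ht => ?_⟩
  · obtain ⟨q, -, hnext⟩ := exists_isNext_of_mem_Sset ha hab ht
    exact hnext.notMem_perSet_left ha hc0 h1 h2
  · obtain ⟨p, -, hnext⟩ := exists_isNext_left_of_mem_Sset ha hab ht
    exact hnext.notMem_perSet_right ha hc0 h1 h2

theorem leftInvOn_Rtil_Rmap (ha : 0 < a) (hab : a < b) (hc0 : c₀ = c - ⌊c / b⌋ * b)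
    (h1 : b - a < c₀) (h2 : c₀ < a) :
    LeftInvOn (Rtil a b c) (Rmap a b c) (perSet a (Ico (c₀ + a - b) c₀))ᶜ := fun _ ht =>
  ((isNext_iff_Rtil ha hab hc0 h1 h2).1 ((isNext_iff_Rmap ha hab hc0 h1 h2).2 ⟨ht, rfl⟩)).2.symm

theorem leftInvOn_Rmap_Rtil (ha : 0 < a) (hab : a < b) (hc0 : c₀ = c - ⌊c / b⌋ * b)
    (h1 : b - a < c₀) (h2 : c₀ < a) :
    LeftInvOn (Rmap a b c) (Rtil a b c) (perSet a (Ico (c - c₀) (c + b - c₀ - a)))ᶜ := fun _ ht =>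
  ((isNext_iff_Rmap ha hab hc0 h1 h2).1 ((isNext_iff_Rtil ha hab hc0 h1 h2).2 ⟨ht, rfl⟩)).2.symm

end Sset

/-- Theorem `dabc1maximal`: with `c₀ = c − ⌊c/b⌋·b` and `b − a < c₀ < a`:
(i) `S_{a,b,c}` is the maximal set invariant under `R_{a,b,c}` and `R̃_{a,b,c}` that is
disjoint from their black holes `[c₀+a−b, c₀) + aℤ` and `[c−c₀, c+b−c₀−a) + aℤ`;
(ii) `ℝ∖S_{a,b,c}` is the minimal set invariant under both transformations that contains
both black holes. -/
theorem S_maximal_invariant_set (a b c c₀ : ℝ)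
    (ha : 0 < a) (hab : a < b) (hbc : b < c)
    (hc0 : c₀ = c - (⌊c / b⌋ : ℝ) * b) (h1 : b - a < c₀) (h2 : c₀ < a) :
    ((Rmap a b c '' Sset a b c ⊆ Sset a b c ∧ Rtil a b c '' Sset a b c ⊆ Sset a b c ∧
        Sset a b c ∩ perSet a (Set.Ico (c₀ + a - b) c₀ ∪ Set.Ico (c - c₀) (c + b - c₀ - a)) = ∅) ∧
      (∀ E : Set ℝ, Rmap a b c '' E ⊆ E → Rtil a b c '' E ⊆ E →
        E ∩ perSet a (Set.Ico (c₀ + a - b) c₀ ∪ Set.Ico (c - c₀) (c + b - c₀ - a)) = ∅ →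
        E ⊆ Sset a b c)) ∧
    ((Rmap a b c '' (Sset a b c)ᶜ ⊆ (Sset a b c)ᶜ ∧
        Rtil a b c '' (Sset a b c)ᶜ ⊆ (Sset a b c)ᶜ ∧
        perSet a (Set.Ico (c₀ + a - b) c₀ ∪ Set.Ico (c - c₀) (c + b - c₀ - a)) ⊆ (Sset a b c)ᶜ) ∧
      (∀ F : Set ℝ, Rmap a b c '' F ⊆ F → Rtil a b c '' F ⊆ F →
        perSet a (Set.Ico (c₀ + a - b) c₀ ∪ Set.Ico (c - c₀) (c + b - c₀ - a)) ⊆ F →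
        (Sset a b c)ᶜ ⊆ F)) := by
  have hS := fun t => mem_Sset_of_forall_iterate_notMem (t := t) ha hab hbc hc0 h1 h2
  have hR := mapsTo_Rmap_Sset ha hab hc0 h1 h2
  have hR' := mapsTo_Rtil_Sset ha hab hc0 h1 h2
  have hinv := leftInvOn_Rtil_Rmap ha hab hc0 h1 h2
  have hinv' := leftInvOn_Rmap_Rtil ha hab hc0 h1 h2
  have hdisj := disjoint_Sset_perSet ha hab hc0 h1 h2
  simp only [perSet_union, ← disjoint_iff_inter_eq_empty, ← mapsTo_iff_image_subset]
  refine ⟨⟨⟨hR, hR', hdisj⟩, fun E hE hE' hEB => subset_of_mapsTo_of_disjoint hS hE hE' hEB⟩,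
    ⟨⟨?_, ?_, subset_compl_iff_disjoint_left.2 hdisj⟩,
      fun F hF hF' hFB => compl_subset_of_mapsTo hS hinv hinv' hF hF' hFB⟩⟩
  · exact mapsTo_compl_of_leftInvOn hR'
      (fun _ => Rmap_eq_self_of_mem_blackHole ha hab hc0 h1 h2) hinv
  · exact mapsTo_compl_of_leftInvOn hR
      (fun _ => Rtil_eq_self_of_mem_blackHole ha hab hc0 h1 h2) hinv'
end
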